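/- Let r : [0,1]² → (0,1) be measurable with log r, log(1-r) ∈ L¹([0,1]²). For a graphon f, let f̄_n and r̄_n denote the level-n block-average approximants. If r̄_n → r a.e. and f̄_n → f in L², then I_{r̄_n}(f̄_n) → I_r(f) as n → ∞. -/

import Mathlib

/-!
Write `Rent a b = -H(a) - a log b - (1 - a) log (1 - b)` with `H` the binary entropy. For
`a ∈ [0,1]`, replacing `b` by `b'` changes `Rent a b` by at most
`|log b - log b'| + |log (1 - b) - log (1 - b')|`, so `I_{r̄ₙ}(g) - I_r(g)` is bounded, uniformly
in `g`, by the `L¹` distances of `log r̄ₙ` to `log r` and of `log (1 - r̄ₙ)` to `log (1 - r)`.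
These tend to `0` by Scheffé's lemma: `-log r̄ₙ ≥ 0` converges a.e. to `-log r`, and Jensen on each
block bounds it by the block average of `-log r`, whose integral is that of `-log r`; since
`1 - r̄ₙ` is the block average of `1 - r`, the same argument applies to it.
It remains to show `I_r(f̄ₙ) → I_r(f)`: `L²` convergence gives convergence in measure, hence a.e.
convergence along subsequences, and `|Rent a r| ≤ 1 + |log r| + |log (1 - r)|` is integrable.
-/
open MeasureTheory

noncomputable def Rent (a b : ℝ) : ℝ :=
  a * Real.log (a / b) + (1 - a) * Real.log ((1 - a) / (1 - b))

noncomputable def sqMeasure : Measure (ℝ × ℝ) :=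
  volume.restrict (Set.Icc (0:ℝ) 1 ×ˢ Set.Icc (0:ℝ) 1)

noncomputable def blockAvg (n : ℕ) (h : ℝ × ℝ → ℝ) : ℝ × ℝ → ℝ := fun q =>
  (n:ℝ)^2 * ∫ p in
      Set.Ico ((⌊(n:ℝ) * q.1⌋ : ℝ) / n) (((⌊(n:ℝ) * q.1⌋ : ℝ) + 1) / n) ×ˢ
      Set.Ico ((⌊(n:ℝ) * q.2⌋ : ℝ) / n) (((⌊(n:ℝ) * q.2⌋ : ℝ) + 1) / n), h p

open Filter Set Real Topology ProbabilityTheory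

theorem Rent_eq (a : ℝ) {b : ℝ} (hb₀ : b ≠ 0) (hb₁ : b ≠ 1) :
    Rent a b = -binEntropy a - a * log b - (1 - a) * log (1 - b) := by
  have hb₁' : 1 - b ≠ 0 := sub_ne_zero.2 hb₁.symm
  have mul_log_div : ∀ x y : ℝ, y ≠ 0 → x * log (x / y) = x * log x - x * log y := by
    intro x y hy
    rcases eq_or_ne x 0 with rfl | hx
    · simp
    · rw [log_div hx hy]; ring
  rw [Rent, mul_log_div a b hb₀, mul_log_div (1 - a) (1 - b) hb₁', binEntropy, log_inv, log_inv]
  ring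

theorem measurable_Rent : Measurable fun x : ℝ × ℝ => Rent x.1 x.2 := by
  unfold Rent
  fun_prop

theorem continuous_Rent_left {b : ℝ} (hb₀ : b ≠ 0) (hb₁ : b ≠ 1) :
    Continuous fun a => Rent a b := by
  simp_rw [Rent_eq _ hb₀ hb₁]
  fun_prop

theorem abs_Rent_le {a b : ℝ} (ha : a ∈ Icc (0 : ℝ) 1) (hb : b ∈ Ioo (0 : ℝ) 1) :
    |Rent a b| ≤ 1 + |log b| + |log (1 - b)| := by
  obtain ⟨ha₀, ha₁⟩ := ha
  rw [Rent_eq a hb.1.ne' hb.2.ne]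
  have hH : |binEntropy a| ≤ 1 := by
    rw [abs_of_nonneg (binEntropy_nonneg ha₀ ha₁)]
    linarith [binEntropy_le_log_two (p := a), log_two_lt_d9]
  have h₁ : |a * log b| ≤ |log b| := by
    rw [abs_mul, abs_of_nonneg ha₀]; exact mul_le_of_le_one_left (abs_nonneg _) ha₁
  have h₂ : |(1 - a) * log (1 - b)| ≤ |log (1 - b)| := by
    rw [abs_mul, abs_of_nonneg (by linarith)]
    exact mul_le_of_le_one_left (abs_nonneg _) (by linarith)
  calc |-binEntropy a - a * log b - (1 - a) * log (1 - b)|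
      ≤ |binEntropy a| + |a * log b| + |(1 - a) * log (1 - b)| := by
        rw [← abs_neg, show -(-binEntropy a - a * log b - (1 - a) * log (1 - b))
          = binEntropy a + a * log b + (1 - a) * log (1 - b) by ring]
        exact abs_add_three _ _ _
    _ ≤ 1 + |log b| + |log (1 - b)| := by linarith

theorem abs_Rent_sub_Rent_le {a b b' : ℝ} (ha : a ∈ Icc (0 : ℝ) 1)
    (hb : b ∈ Ioo (0 : ℝ) 1) (hb' : b' ∈ Ioo (0 : ℝ) 1) :
    |Rent a b - Rent a b'| ≤ |log b - log b'| + |log (1 - b) - log (1 - b')| := by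
  obtain ⟨ha₀, ha₁⟩ := ha
  rw [Rent_eq a hb.1.ne' hb.2.ne, Rent_eq a hb'.1.ne' hb'.2.ne]
  calc |-binEntropy a - a * log b - (1 - a) * log (1 - b)
        - (-binEntropy a - a * log b' - (1 - a) * log (1 - b'))|
      = |a * (log b' - log b) + (1 - a) * (log (1 - b') - log (1 - b))| := by ring_nf
    _ ≤ a * |log b' - log b| + (1 - a) * |log (1 - b') - log (1 - b)| := by
        refine (abs_add_le _ _).trans_eq ?_
        rw [abs_mul, abs_mul, abs_of_nonneg ha₀, abs_of_nonneg (sub_nonneg.2 ha₁)]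
    _ ≤ |log b - log b'| + |log (1 - b) - log (1 - b')| := by
        rw [abs_sub_comm (log b'), abs_sub_comm (log (1 - b'))]
        nlinarith [abs_nonneg (log b - log b'), abs_nonneg (log (1 - b) - log (1 - b'))]

section Integral

variable {α : Type*} [MeasurableSpace α] {μ : Measure α}

theorem integral_pos_of_ae_pos [IsProbabilityMeasure μ] {f : α → ℝ} (hf : Integrable f μ)
    (hpos : ∀ᵐ x ∂μ, 0 < f x) : 0 < ∫ x, f x ∂μ := by
  obtain ⟨x, hx, hle⟩ := exists_notMem_null_le_integral hf (ae_iff.1 hpos)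
  exact (not_not.1 hx).trans_le hle

theorem integral_log_le_log_integral [IsProbabilityMeasure μ] {f : α → ℝ} (hf : Integrable f μ)
    (hpos : ∀ᵐ x ∂μ, 0 < f x) (hlog : Integrable (fun x => log (f x)) μ) :
    ∫ x, log (f x) ∂μ ≤ log (∫ x, f x ∂μ) := by
  set m := ∫ x, f x ∂μ
  have hm : 0 < m := integral_pos_of_ae_pos hf hpos
  -- the tangent line of `log` at `m`
  have htangent : ∀ᵐ x ∂μ, log (f x) ≤ f x / m + (log m - 1) := by
    filter_upwards [hpos] with x hx
    have := log_le_sub_one_of_pos (div_pos hx hm)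
    rw [log_div hx.ne' hm.ne'] at this
    linarith
  calc ∫ x, log (f x) ∂μ ≤ ∫ x, (f x / m + (log m - 1)) ∂μ :=
        integral_mono_ae hlog ((hf.div_const m).add (integrable_const _)) htangent
    _ = log m := by
        rw [integral_add (hf.div_const m) (integrable_const _), integral_div, integral_const,
          probReal_univ, one_smul, div_self hm.ne']
        ring

/-- Scheffé's lemma. -/
theorem tendsto_integral_abs_sub_of_tendsto_ae {u : ℕ → α → ℝ} {v : α → ℝ}
    (hu₀ : ∀ n, 0 ≤ᵐ[μ] u n) (hu : ∀ n, Integrable (u n) μ) (hv : Integrable v μ)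
    (hlim : ∀ᵐ x ∂μ, Tendsto (fun n => u n x) atTop (𝓝 (v x)))
    (hle : ∀ᶠ n in atTop, ∫ x, u n x ∂μ ≤ ∫ x, v x ∂μ) :
    Tendsto (fun n => ∫ x, |u n x - v x| ∂μ) atTop (𝓝 0) := by
  -- `|u - v| = (u - v) + 2 (v - u)⁺`, and `(v - u)⁺ ≤ |v|` since `u ≥ 0`
  have hpos_int : ∀ n, Integrable (fun x => max (v x - u n x) 0) μ :=
    fun n => (hv.sub (hu n)).pos_part
  have hpos : Tendsto (fun n => ∫ x, max (v x - u n x) 0 ∂μ) atTop (𝓝 0) := by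
    have := tendsto_integral_of_dominated_convergence (fun x => |v x|)
      (fun n => (hpos_int n).aestronglyMeasurable) hv.abs
      (fun n => by
        filter_upwards [hu₀ n] with x (hx : 0 ≤ u n x)
        rw [norm_of_nonneg (le_max_right _ _)]
        exact max_le (by linarith [le_abs_self (v x)]) (abs_nonneg _))
      (by
        filter_upwards [hlim] with x hx
        simpa using ((tendsto_const_nhds.sub hx).max tendsto_const_nhds :
          Tendsto (fun n => max (v x - u n x) 0) atTop (𝓝 (max (v x - v x) 0))))
    simpa using this
  refine squeeze_zero' (Eventually.of_forall fun n => integral_nonneg fun x => abs_nonneg _)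
    ?_ (by simpa using hpos.const_mul 2)
  filter_upwards [hle] with n hn
  have hsplit : ∫ x, |u n x - v x| ∂μ
      = (∫ x, u n x ∂μ - ∫ x, v x ∂μ) + 2 * ∫ x, max (v x - u n x) 0 ∂μ := by
    have hdiff : Integrable (fun x => u n x - v x) μ := (hu n).sub hv
    rw [← integral_sub (hu n) hv, ← integral_const_mul,
      ← integral_add hdiff ((hpos_int n).const_mul 2)]
    congr 1 with x
    rcases le_total (u n x) (v x) with h | h
    · rw [abs_of_nonpos (by linarith), max_eq_left (by linarith)]; ring
    · rw [abs_of_nonneg (by linarith), max_eq_right (by linarith)]; ring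
  linarith

theorem tendstoInMeasure_of_tendsto_integral_sq [IsFiniteMeasure μ] {ι : Type*} {l : Filter ι}
    {g : ι → α → ℝ} {f : α → ℝ} (hsq : ∀ i, Integrable (fun x => (g i x - f x) ^ 2) μ)
    (h : Tendsto (fun i => ∫ x, (g i x - f x) ^ 2 ∂μ) l (𝓝 0)) :
    TendstoInMeasure μ g l f := by
  rw [tendstoInMeasure_iff_measureReal_dist]
  intro ε hε
  have hchebyshev : ∀ i, μ.real {x | ε ≤ dist (g i x) (f x)}
      ≤ (∫ x, (g i x - f x) ^ 2 ∂μ) / ε ^ 2 := by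
    intro i
    rw [le_div_iff₀ (by positivity), mul_comm]
    refine le_trans ?_ (mul_meas_ge_le_integral_of_nonneg
      (Eventually.of_forall fun x => sq_nonneg _) (hsq i) (ε ^ 2))
    refine mul_le_mul_of_nonneg_left (measureReal_mono (fun x hx => ?_) (measure_ne_top _ _))
      (by positivity)
    rw [mem_ofPred_eq, Real.dist_eq] at hx
    simpa [sq_abs] using pow_le_pow_left₀ hε.le hx 2
  exact squeeze_zero (fun i => measureReal_nonneg) hchebyshev (by simpa using h.div_const (ε ^ 2))

end Integral

section RentIntegral

variable {α : Type*} [MeasurableSpace α] {μ : Measure α} [IsFiniteMeasure μ]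

theorem integrable_Rent {a b : α → ℝ} (ha : Measurable a) (hb : Measurable b)
    (ha01 : ∀ᵐ x ∂μ, a x ∈ Icc (0 : ℝ) 1) (hb01 : ∀ᵐ x ∂μ, b x ∈ Ioo (0 : ℝ) 1)
    (hlog : Integrable (fun x => log (b x)) μ) (hlog' : Integrable (fun x => log (1 - b x)) μ) :
    Integrable (fun x => Rent (a x) (b x)) μ :=
  Integrable.mono' (((integrable_const 1).add hlog.abs).add hlog'.abs)
    (measurable_Rent.comp (ha.prodMk hb)).aestronglyMeasurable
    (by filter_upwards [ha01, hb01] with x hax hbx using abs_Rent_le hax hbx)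

theorem abs_integral_Rent_sub_le {a b b' : α → ℝ} (ha : Measurable a)
    (hb : Measurable b) (hb' : Measurable b') (ha01 : ∀ᵐ x ∂μ, a x ∈ Icc (0 : ℝ) 1)
    (hb01 : ∀ᵐ x ∂μ, b x ∈ Ioo (0 : ℝ) 1) (hb'01 : ∀ᵐ x ∂μ, b' x ∈ Ioo (0 : ℝ) 1)
    (hlogb : Integrable (fun x => log (b x)) μ) (hlogb₁ : Integrable (fun x => log (1 - b x)) μ)
    (hlogb' : Integrable (fun x => log (b' x)) μ)
    (hlogb₁' : Integrable (fun x => log (1 - b' x)) μ) :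
    |∫ x, Rent (a x) (b x) ∂μ - ∫ x, Rent (a x) (b' x) ∂μ|
      ≤ ∫ x, |log (b x) - log (b' x)| ∂μ + ∫ x, |log (1 - b x) - log (1 - b' x)| ∂μ := by
  have hR := integrable_Rent ha hb ha01 hb01 hlogb hlogb₁
  have hR' := integrable_Rent ha hb' ha01 hb'01 hlogb' hlogb₁'
  have hd : Integrable (fun x => |log (b x) - log (b' x)|) μ := (hlogb.sub hlogb').abs
  have hd' : Integrable (fun x => |log (1 - b x) - log (1 - b' x)|) μ :=
    (hlogb₁.sub hlogb₁').abs
  rw [← integral_sub hR hR', ← integral_add hd hd']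
  refine abs_integral_le_integral_abs.trans (integral_mono_ae (hR.sub hR').abs (hd.add hd') ?_)
  filter_upwards [ha01, hb01, hb'01] with x hax hbx hb'x using abs_Rent_sub_Rent_le hax hbx hb'x

theorem tendsto_integral_Rent_of_tendstoInMeasure {a : ℕ → α → ℝ} {a₀ b : α → ℝ}
    (ha : ∀ n, Measurable (a n)) (hb : Measurable b)
    (ha01 : ∀ n, ∀ᵐ x ∂μ, a n x ∈ Icc (0 : ℝ) 1) (hb01 : ∀ᵐ x ∂μ, b x ∈ Ioo (0 : ℝ) 1)
    (hlog : Integrable (fun x => log (b x)) μ) (hlog' : Integrable (fun x => log (1 - b x)) μ)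
    (hlim : TendstoInMeasure μ a atTop a₀) :
    Tendsto (fun n => ∫ x, Rent (a n x) (b x) ∂μ) atTop (𝓝 (∫ x, Rent (a₀ x) (b x) ∂μ)) := by
  refine tendsto_of_subseq_tendsto fun ns hns => ?_
  obtain ⟨ms, -, hms⟩ := (hlim.comp hns).exists_seq_tendsto_ae
  refine ⟨ms, tendsto_integral_of_dominated_convergence
    (fun x => 1 + |log (b x)| + |log (1 - b x)|)
    (fun k => (measurable_Rent.comp ((ha _).prodMk hb)).aestronglyMeasurable)
    (((integrable_const 1).add hlog.abs).add hlog'.abs)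
    (fun k => by filter_upwards [ha01 (ns (ms k)), hb01] with x hax hbx using abs_Rent_le hax hbx)
    ?_⟩
  filter_upwards [hms, hb01] with x hx hbx
  exact ((continuous_Rent_left hbx.1.ne' hbx.2.ne).tendsto _).comp hx

end RentIntegral

section Grid

def unitSquare : Set (ℝ × ℝ) := Icc 0 1 ×ˢ Icc 0 1

def gridInterval (n : ℕ) (i : ℤ) : Set ℝ := Ico (i / n) ((i + 1) / n)

def gridCell (n : ℕ) (i j : ℤ) : Set (ℝ × ℝ) := gridInterval n i ×ˢ gridInterval n j

def gridBlock (n : ℕ) (q : ℝ × ℝ) : Set (ℝ × ℝ) := gridCell n ⌊(n : ℝ) * q.1⌋ ⌊(n : ℝ) * q.2⌋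

variable {n : ℕ}

theorem blockAvg_eq_setIntegral (n : ℕ) (h : ℝ × ℝ → ℝ) (q : ℝ × ℝ) :
    blockAvg n h q = n ^ 2 * ∫ p in gridBlock n q, h p := rfl

theorem mem_gridInterval_iff (hn : n ≠ 0) {i : ℤ} {x : ℝ} :
    x ∈ gridInterval n i ↔ ⌊(n : ℝ) * x⌋ = i := by
  have hn' : (0 : ℝ) < n := by positivity
  rw [gridInterval, mem_Ico, Int.floor_eq_iff, div_le_iff₀ hn', lt_div_iff₀ hn', mul_comm x]

theorem gridInterval_subset_Ico {i : ℤ} (hi : i ∈ Finset.Ico 0 (n : ℤ)) :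
    gridInterval n i ⊆ Ico 0 1 := by
  rw [Finset.mem_Ico] at hi
  have hn : (0 : ℝ) < n := by exact_mod_cast hi.1.trans_lt hi.2
  have hi₀ : (0 : ℝ) ≤ i := by exact_mod_cast hi.1
  have hi₁ : (i : ℝ) + 1 ≤ n := by exact_mod_cast hi.2
  intro x ⟨hx₀, hx₁⟩
  exact ⟨(div_nonneg hi₀ hn.le).trans hx₀, hx₁.trans_le ((div_le_one hn).2 hi₁)⟩

theorem floor_mul_mem_Ico (hn : n ≠ 0) {x : ℝ} (hx : x ∈ Ico (0 : ℝ) 1) :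
    ⌊(n : ℝ) * x⌋ ∈ Finset.Ico 0 (n : ℤ) := by
  have hn' : (0 : ℝ) < n := by positivity
  rw [Finset.mem_Ico, Int.floor_nonneg, Int.floor_lt]
  exact ⟨by nlinarith [hx.1], by push_cast; nlinarith [hx.2]⟩

theorem measurableSet_gridCell (n : ℕ) (i j : ℤ) : MeasurableSet (gridCell n i j) :=
  measurableSet_Ico.prod measurableSet_Ico

theorem volume_gridCell (n : ℕ) (i j : ℤ) :
    volume (gridCell n i j) = ENNReal.ofReal (n : ℝ)⁻¹ * ENNReal.ofReal (n : ℝ)⁻¹ := by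
  have hlen : ∀ k : ℤ, ((k : ℝ) + 1) / n - k / n = (n : ℝ)⁻¹ := fun k => by ring
  rw [gridCell, Measure.volume_eq_prod, Measure.prod_prod, gridInterval, gridInterval,
    Real.volume_Ico, Real.volume_Ico, hlen, hlen]

theorem volume_real_gridCell (n : ℕ) (i j : ℤ) :
    volume.real (gridCell n i j) = (n : ℝ)⁻¹ ^ 2 := by
  rw [measureReal_def, volume_gridCell, ENNReal.toReal_mul, ENNReal.toReal_ofReal (by positivity),
    sq]

theorem volume_gridCell_ne_zero (hn : n ≠ 0) (i j : ℤ) : volume (gridCell n i j) ≠ 0 := by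
  rw [volume_gridCell]
  simp [hn]

theorem volume_gridCell_ne_top (n : ℕ) (i j : ℤ) : volume (gridCell n i j) ≠ ⊤ := by
  rw [volume_gridCell]
  finiteness

theorem Ico_prod_Ico_eq_biUnion_gridCell (hn : n ≠ 0) :
    Ico (0 : ℝ) 1 ×ˢ Ico (0 : ℝ) 1
      = ⋃ ij ∈ Finset.Ico 0 (n : ℤ) ×ˢ Finset.Ico 0 (n : ℤ), gridCell n ij.1 ij.2 := by
  ext q
  simp only [mem_iUnion, Finset.mem_product, exists_prop, Prod.exists]
  constructor
  · rintro ⟨hq₁, hq₂⟩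
    exact ⟨_, _, ⟨floor_mul_mem_Ico hn hq₁, floor_mul_mem_Ico hn hq₂⟩,
      (mem_gridInterval_iff hn).2 rfl, (mem_gridInterval_iff hn).2 rfl⟩
  · rintro ⟨i, j, ⟨hi, hj⟩, hq₁, hq₂⟩
    exact ⟨gridInterval_subset_Ico hi hq₁, gridInterval_subset_Ico hj hq₂⟩

theorem pairwise_disjoint_gridCell (hn : n ≠ 0) :
    Pairwise (Function.onFun Disjoint fun ij : ℤ × ℤ => gridCell n ij.1 ij.2) := by
  rintro ⟨i, j⟩ ⟨i', j'⟩ hne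
  refine Set.disjoint_left.2 fun q ⟨hq₁, hq₂⟩ ⟨hq₁', hq₂'⟩ => hne ?_
  rw [mem_gridInterval_iff hn] at hq₁ hq₂ hq₁' hq₂'
  exact Prod.ext (hq₁.symm.trans hq₁') (hq₂.symm.trans hq₂')

theorem gridBlock_eq_of_mem_gridCell (hn : n ≠ 0) {i j : ℤ} {q : ℝ × ℝ}
    (hq : q ∈ gridCell n i j) : gridBlock n q = gridCell n i j := by
  rw [gridBlock, (mem_gridInterval_iff hn).1 hq.1, (mem_gridInterval_iff hn).1 hq.2]

theorem gridBlock_subset_unitSquare (hn : n ≠ 0) {q : ℝ × ℝ}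
    (hq : q ∈ Ico (0 : ℝ) 1 ×ˢ Ico (0 : ℝ) 1) : gridBlock n q ⊆ unitSquare := by
  intro p ⟨hp₁, hp₂⟩
  exact ⟨Ico_subset_Icc_self (gridInterval_subset_Ico (floor_mul_mem_Ico hn hq.1) hp₁),
    Ico_subset_Icc_self (gridInterval_subset_Ico (floor_mul_mem_Ico hn hq.2) hp₂)⟩

theorem sqMeasure_eq_restrict_Ico :
    sqMeasure = volume.restrict (Ico (0 : ℝ) 1 ×ˢ Ico (0 : ℝ) 1) := by
  rw [sqMeasure, Measure.volume_eq_prod,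
    Measure.restrict_congr_set (Measure.set_prod_ae_eq Ico_ae_eq_Icc Ico_ae_eq_Icc)]

instance : IsProbabilityMeasure sqMeasure :=
  ⟨by rw [sqMeasure, Measure.restrict_apply_univ, Measure.volume_eq_prod, Measure.prod_prod]; simp⟩

theorem ae_mem_Ico_prod_Ico : ∀ᵐ q ∂sqMeasure, q ∈ Ico (0 : ℝ) 1 ×ˢ Ico (0 : ℝ) 1 := by
  rw [sqMeasure_eq_restrict_Ico]
  exact ae_restrict_mem (measurableSet_Ico.prod measurableSet_Ico)

theorem ae_mem_unitSquare : ∀ᵐ q ∂sqMeasure, q ∈ unitSquare :=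
  ae_restrict_mem (measurableSet_Icc.prod measurableSet_Icc)

end Grid

section BlockAvg

variable {n : ℕ} {h : ℝ × ℝ → ℝ} {q : ℝ × ℝ}

theorem measurable_blockAvg (n : ℕ) (h : ℝ × ℝ → ℝ) : Measurable (blockAvg n h) := by
  have : blockAvg n h = (fun ij : ℤ × ℤ => (n : ℝ) ^ 2 * ∫ p in gridCell n ij.1 ij.2, h p) ∘
      fun q => (⌊(n : ℝ) * q.1⌋, ⌊(n : ℝ) * q.2⌋) := rfl
  rw [this]
  exact (measurable_of_countable _).comp
    ((Int.measurable_floor.comp (measurable_fst.const_mul _)).prodMk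
      (Int.measurable_floor.comp (measurable_snd.const_mul _)))

theorem isProbabilityMeasure_cond_gridBlock (hn : n ≠ 0) (q : ℝ × ℝ) :
    IsProbabilityMeasure (volume[|gridBlock n q]) :=
  cond_isProbabilityMeasure_of_finite (volume_gridCell_ne_zero hn _ _)
    (volume_gridCell_ne_top _ _ _)

/-- For `n = 0` the block is empty and both sides vanish. -/
theorem blockAvg_eq_integral_cond (n : ℕ) (h : ℝ × ℝ → ℝ) (q : ℝ × ℝ) :
    blockAvg n h q = ∫ p, h p ∂volume[|gridBlock n q] := by
  rw [blockAvg_eq_setIntegral, ProbabilityTheory.cond, integral_smul_measure, smul_eq_mul,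
    ENNReal.toReal_inv, ← measureReal_def, gridBlock, volume_real_gridCell, inv_pow, inv_inv]

theorem ae_cond_gridBlock_mem_unitSquare (hn : n ≠ 0) (hq : q ∈ Ico (0 : ℝ) 1 ×ˢ Ico (0 : ℝ) 1) :
    ∀ᵐ p ∂volume[|gridBlock n q], p ∈ unitSquare :=
  (ae_cond_mem (measurableSet_gridCell _ _ _)).mono fun _ hp => gridBlock_subset_unitSquare hn hq hp

theorem integrable_cond_gridBlock (hn : n ≠ 0) (hq : q ∈ Ico (0 : ℝ) 1 ×ˢ Ico (0 : ℝ) 1)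
    (hint : Integrable h sqMeasure) : Integrable h (volume[|gridBlock n q]) :=
  (IntegrableOn.mono_set hint (gridBlock_subset_unitSquare hn hq)).smul_measure
    (ENNReal.inv_ne_top.2 (volume_gridCell_ne_zero hn _ _))

theorem integrable_sqMeasure_of_mem_Icc (hm : Measurable h)
    (h01 : ∀ p ∈ unitSquare, h p ∈ Icc (0 : ℝ) 1) : Integrable h sqMeasure :=
  Integrable.of_bound hm.aestronglyMeasurable 1 <| ae_mem_unitSquare.mono fun p hp => by
    rw [Real.norm_eq_abs, abs_le]
    exact ⟨by linarith [(h01 p hp).1], (h01 p hp).2⟩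

theorem ae_blockAvg_mem_Icc (n : ℕ) (hm : Measurable h)
    (h01 : ∀ p ∈ unitSquare, h p ∈ Icc (0 : ℝ) 1) :
    ∀ᵐ q ∂sqMeasure, blockAvg n h q ∈ Icc (0 : ℝ) 1 := by
  filter_upwards [ae_mem_Ico_prod_Ico] with q hq
  rcases eq_or_ne n 0 with rfl | hn
  · simp [blockAvg]
  have := isProbabilityMeasure_cond_gridBlock hn q
  rw [blockAvg_eq_integral_cond n]
  exact (convex_Icc 0 1).integral_mem isClosed_Icc
    ((ae_cond_gridBlock_mem_unitSquare hn hq).mono h01)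
    (integrable_cond_gridBlock hn hq (integrable_sqMeasure_of_mem_Icc hm h01))

theorem blockAvg_one_sub (hn : n ≠ 0) (hq : q ∈ Ico (0 : ℝ) 1 ×ˢ Ico (0 : ℝ) 1)
    (hint : Integrable h sqMeasure) :
    blockAvg n (fun p => 1 - h p) q = 1 - blockAvg n h q := by
  have := isProbabilityMeasure_cond_gridBlock hn q
  rw [blockAvg_eq_integral_cond n, blockAvg_eq_integral_cond n,
    integral_sub (integrable_const 1) (integrable_cond_gridBlock hn hq hint), integral_const,
    probReal_univ, one_smul]

theorem ae_blockAvg_mem_Ioo (hn : n ≠ 0) (hm : Measurable h)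
    (h01 : ∀ p ∈ unitSquare, h p ∈ Ioo (0 : ℝ) 1) :
    ∀ᵐ q ∂sqMeasure, blockAvg n h q ∈ Ioo (0 : ℝ) 1 := by
  filter_upwards [ae_mem_Ico_prod_Ico] with q hq
  have := isProbabilityMeasure_cond_gridBlock hn q
  have hint := integrable_sqMeasure_of_mem_Icc hm fun p hp => Ioo_subset_Icc_self (h01 p hp)
  have hmem := (ae_cond_gridBlock_mem_unitSquare hn hq).mono h01
  have hpos : 0 < blockAvg n h q := by
    rw [blockAvg_eq_integral_cond n]
    exact integral_pos_of_ae_pos (integrable_cond_gridBlock hn hq hint) (hmem.mono fun _ hp => hp.1)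
  have hlt : 0 < blockAvg n (fun p => 1 - h p) q := by
    rw [blockAvg_eq_integral_cond n]
    exact integral_pos_of_ae_pos ((integrable_const 1).sub (integrable_cond_gridBlock hn hq hint))
      (hmem.mono fun _ hp => sub_pos.2 hp.2)
  rw [blockAvg_one_sub hn hq hint] at hlt
  exact ⟨hpos, by linarith⟩

theorem integrable_blockAvg (n : ℕ) {v : ℝ × ℝ → ℝ} (hv : Integrable v sqMeasure) :
    Integrable (blockAvg n v) sqMeasure := by
  refine Integrable.of_bound (measurable_blockAvg n v).aestronglyMeasurable
    (n ^ 2 * ∫ p in unitSquare, |v p|) ?_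
  filter_upwards [ae_mem_Ico_prod_Ico] with q hq
  rcases eq_or_ne n 0 with rfl | hn
  · simp [blockAvg]
  rw [Real.norm_eq_abs, blockAvg_eq_setIntegral, abs_mul, abs_of_nonneg (by positivity)]
  gcongr
  exact abs_integral_le_integral_abs.trans (setIntegral_mono_set hv.abs
    (ae_of_all _ fun _ => abs_nonneg _) (gridBlock_subset_unitSquare hn hq).eventuallyLE)

theorem integral_blockAvg (hn : n ≠ 0) {v : ℝ × ℝ → ℝ} (hv : Integrable v sqMeasure) :
    ∫ q, blockAvg n v q ∂sqMeasure = ∫ q, v q ∂sqMeasure := by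
  set cells := Finset.Ico 0 (n : ℤ) ×ˢ Finset.Ico 0 (n : ℤ)
  have hmeas : ∀ ij ∈ cells, MeasurableSet (gridCell n ij.1 ij.2) :=
    fun _ _ => measurableSet_gridCell _ _ _
  have hdisj := (pairwise_disjoint_gridCell hn).set_pairwise (cells : Set (ℤ × ℤ))
  have hconst : ∀ ij ∈ cells, EqOn (blockAvg n v)
      (fun _ => (n : ℝ) ^ 2 * ∫ p in gridCell n ij.1 ij.2, v p) (gridCell n ij.1 ij.2) :=
    fun _ _ _ hq => by rw [blockAvg_eq_setIntegral, gridBlock_eq_of_mem_gridCell hn hq]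
  have hv' : IntegrableOn v (⋃ ij ∈ cells, gridCell n ij.1 ij.2) := by
    rw [← Ico_prod_Ico_eq_biUnion_gridCell hn, IntegrableOn, ← sqMeasure_eq_restrict_Ico]
    exact hv
  rw [sqMeasure_eq_restrict_Ico, Ico_prod_Ico_eq_biUnion_gridCell hn,
    integral_biUnion_finset _ hmeas hdisj fun ij hij =>
      (integrableOn_congr_fun (hconst ij hij) (hmeas ij hij)).2
        (integrableOn_const (volume_gridCell_ne_top _ _ _)),
    integral_biUnion_finset _ hmeas hdisj fun ij hij =>
      hv'.mono_set (subset_biUnion_of_mem (u := fun ij => gridCell n ij.1 ij.2) hij)]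
  refine Finset.sum_congr rfl fun ij hij => ?_
  rw [setIntegral_congr_fun (hmeas ij hij) (hconst ij hij), setIntegral_const,
    volume_real_gridCell, smul_eq_mul, ← mul_assoc, ← mul_pow, inv_mul_cancel₀ (by positivity),
    one_pow, one_mul]

end BlockAvg

section LogBlockAvg

variable {s : ℝ × ℝ → ℝ}

theorem neg_log_blockAvg_le {n : ℕ} (hn : n ≠ 0) {q : ℝ × ℝ}
    (hq : q ∈ Ico (0 : ℝ) 1 ×ˢ Ico (0 : ℝ) 1) (hm : Measurable s)
    (h01 : ∀ p ∈ unitSquare, s p ∈ Ioo (0 : ℝ) 1)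
    (hlog : Integrable (fun p => log (s p)) sqMeasure) :
    -log (blockAvg n s q) ≤ blockAvg n (fun p => -log (s p)) q := by
  have := isProbabilityMeasure_cond_gridBlock hn q
  rw [blockAvg_eq_integral_cond, blockAvg_eq_integral_cond, integral_neg, neg_le_neg_iff]
  exact integral_log_le_log_integral
    (integrable_cond_gridBlock hn hq
      (integrable_sqMeasure_of_mem_Icc hm fun p hp => Ioo_subset_Icc_self (h01 p hp)))
    ((ae_cond_gridBlock_mem_unitSquare hn hq).mono fun p hp => (h01 p hp).1)
    (integrable_cond_gridBlock hn hq hlog)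

theorem integrable_log_blockAvg (n : ℕ) (hm : Measurable s)
    (h01 : ∀ p ∈ unitSquare, s p ∈ Ioo (0 : ℝ) 1)
    (hlog : Integrable (fun p => log (s p)) sqMeasure) :
    Integrable (fun q => log (blockAvg n s q)) sqMeasure := by
  rcases eq_or_ne n 0 with rfl | hn
  · simp [blockAvg]
  refine (integrable_blockAvg n hlog.neg).mono'
    (measurable_log.comp (measurable_blockAvg n s)).aestronglyMeasurable ?_
  filter_upwards [ae_mem_Ico_prod_Ico, ae_blockAvg_mem_Ioo hn hm h01] with q hq hs
  rw [Real.norm_eq_abs, abs_of_nonpos (log_nonpos hs.1.le hs.2.le)]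
  exact neg_log_blockAvg_le hn hq hm h01 hlog

theorem integrable_log_one_sub_blockAvg {n : ℕ} (hn : n ≠ 0) (hm : Measurable s)
    (h01 : ∀ p ∈ unitSquare, s p ∈ Ioo (0 : ℝ) 1)
    (hlog' : Integrable (fun p => log (1 - s p)) sqMeasure) :
    Integrable (fun q => log (1 - blockAvg n s q)) sqMeasure := by
  have hint := integrable_sqMeasure_of_mem_Icc hm fun p hp => Ioo_subset_Icc_self (h01 p hp)
  refine (integrable_log_blockAvg n (hm.const_sub 1)
    (fun p hp => ⟨sub_pos.2 (h01 p hp).2, sub_lt_self 1 (h01 p hp).1⟩) hlog').congr ?_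
  filter_upwards [ae_mem_Ico_prod_Ico] with q hq
  rw [blockAvg_one_sub hn hq hint]

theorem tendsto_integral_abs_log_blockAvg_sub (hm : Measurable s)
    (h01 : ∀ p ∈ unitSquare, s p ∈ Ioo (0 : ℝ) 1) (hlog : Integrable (fun p => log (s p)) sqMeasure)
    (hlim : ∀ᵐ p ∂sqMeasure, Tendsto (fun n => blockAvg n s p) atTop (𝓝 (s p))) :
    Tendsto (fun n => ∫ p, |log (blockAvg n s p) - log (s p)| ∂sqMeasure) atTop (𝓝 0) := by
  have hscheffe := tendsto_integral_abs_sub_of_tendsto_ae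
    (u := fun n p => -log (blockAvg n s p)) (v := fun p => -log (s p))
    (fun n => by
      filter_upwards [ae_blockAvg_mem_Icc n hm fun p hp => Ioo_subset_Icc_self (h01 p hp)]
        with q hq using neg_nonneg.2 (log_nonpos hq.1 hq.2))
    (fun n => (integrable_log_blockAvg n hm h01 hlog).neg) hlog.neg
    (by
      filter_upwards [hlim, ae_mem_unitSquare] with p hp hps
      exact ((continuousAt_log (h01 p hps).1.ne').tendsto.comp hp).neg)
    (by
      filter_upwards [eventually_ne_atTop 0] with n hn
      calc ∫ q, -log (blockAvg n s q) ∂sqMeasure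
          ≤ ∫ q, blockAvg n (fun p => -log (s p)) q ∂sqMeasure :=
            integral_mono_ae (integrable_log_blockAvg n hm h01 hlog).neg
              (integrable_blockAvg n hlog.neg)
              (by filter_upwards [ae_mem_Ico_prod_Ico] with q hq
                    using neg_log_blockAvg_le hn hq hm h01 hlog)
        _ = ∫ q, -log (s q) ∂sqMeasure := integral_blockAvg hn hlog.neg)
  simpa only [neg_sub_neg, abs_sub_comm] using hscheffe

theorem tendsto_integral_abs_log_one_sub_blockAvg_sub (hm : Measurable s)
    (h01 : ∀ p ∈ unitSquare, s p ∈ Ioo (0 : ℝ) 1)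
    (hlog' : Integrable (fun p => log (1 - s p)) sqMeasure)
    (hlim : ∀ᵐ p ∂sqMeasure, Tendsto (fun n => blockAvg n s p) atTop (𝓝 (s p))) :
    Tendsto (fun n => ∫ p, |log (1 - blockAvg n s p) - log (1 - s p)| ∂sqMeasure) atTop (𝓝 0) := by
  have hint := integrable_sqMeasure_of_mem_Icc hm fun p hp => Ioo_subset_Icc_self (h01 p hp)
  have h01' : ∀ p ∈ unitSquare, 1 - s p ∈ Ioo (0 : ℝ) 1 :=
    fun p hp => ⟨sub_pos.2 (h01 p hp).2, sub_lt_self 1 (h01 p hp).1⟩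
  have hlim' : ∀ᵐ p ∂sqMeasure,
      Tendsto (fun n => blockAvg n (fun p => 1 - s p) p) atTop (𝓝 (1 - s p)) := by
    filter_upwards [hlim, ae_mem_Ico_prod_Ico] with p hp hq
    refine (tendsto_const_nhds.sub hp).congr' ?_
    filter_upwards [eventually_ne_atTop 0] with n hn
    exact (blockAvg_one_sub hn hq hint).symm
  refine (tendsto_integral_abs_log_blockAvg_sub (hm.const_sub 1) h01' hlog' hlim').congr' ?_
  filter_upwards [eventually_ne_atTop 0] with n hn
  refine integral_congr_ae ?_
  filter_upwards [ae_mem_Ico_prod_Ico] with q hq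
  rw [blockAvg_one_sub hn hq hint]

end LogBlockAvg

theorem tendsto_integral_Rent_blockAvg_sub_integral_Rent {r : ℝ × ℝ → ℝ} (hrm : Measurable r)
    (hr : ∀ p ∈ unitSquare, r p ∈ Ioo (0 : ℝ) 1)
    (hlogr : Integrable (fun p => log (r p)) sqMeasure)
    (hlogr' : Integrable (fun p => log (1 - r p)) sqMeasure)
    (hrae : ∀ᵐ p ∂sqMeasure, Tendsto (fun n => blockAvg n r p) atTop (𝓝 (r p)))
    {a : ℕ → ℝ × ℝ → ℝ} (ha : ∀ n, Measurable (a n))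
    (ha01 : ∀ n, ∀ᵐ p ∂sqMeasure, a n p ∈ Icc (0 : ℝ) 1) :
    Tendsto (fun n => ∫ p, Rent (a n p) (blockAvg n r p) ∂sqMeasure
      - ∫ p, Rent (a n p) (r p) ∂sqMeasure) atTop (𝓝 0) := by
  refine squeeze_zero_norm' ?_ (by
    simpa using (tendsto_integral_abs_log_blockAvg_sub hrm hr hlogr hrae).add
      (tendsto_integral_abs_log_one_sub_blockAvg_sub hrm hr hlogr' hrae))
  filter_upwards [eventually_ne_atTop 0] with n hn
  exact abs_integral_Rent_sub_le (ha n) (measurable_blockAvg n r) hrm (ha01 n)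
    (ae_blockAvg_mem_Ioo hn hrm hr) (ae_mem_unitSquare.mono hr)
    (integrable_log_blockAvg n hrm hr hlogr) (integrable_log_one_sub_blockAvg hn hrm hr hlogr')
    hlogr hlogr'

theorem blockAvg_rate_convergence_general
    (r : ℝ × ℝ → ℝ) (hrm : Measurable r)
    (hr : ∀ p ∈ Set.Icc (0:ℝ) 1 ×ˢ Set.Icc (0:ℝ) 1, r p ∈ Set.Ioo (0:ℝ) 1)
    (hlogr : Integrable (fun p => Real.log (r p)) sqMeasure)
    (hlogr' : Integrable (fun p => Real.log (1 - r p)) sqMeasure)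
    (f : ℝ × ℝ → ℝ) (hfm : Measurable f)
    (hf01 : ∀ p ∈ Set.Icc (0:ℝ) 1 ×ˢ Set.Icc (0:ℝ) 1, f p ∈ Set.Icc (0:ℝ) 1)
    (hrae : ∀ᵐ p ∂sqMeasure,
      Filter.Tendsto (fun n => blockAvg n r p) Filter.atTop (nhds (r p)))
    (hfL2 : Filter.Tendsto (fun n => ∫ p, (blockAvg n f p - f p)^2 ∂sqMeasure)
      Filter.atTop (nhds 0)) :
    Filter.Tendsto
      (fun n => ∫ p, Rent (blockAvg n f p) (blockAvg n r p) ∂sqMeasure)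
      Filter.atTop (nhds (∫ p, Rent (f p) (r p) ∂sqMeasure)) := by
  have hF01 (n : ℕ) := ae_blockAvg_mem_Icc n hfm hf01
  have hsq (n : ℕ) : Integrable (fun p => (blockAvg n f p - f p) ^ 2) sqMeasure :=
    Integrable.of_bound (((measurable_blockAvg n f).sub hfm).pow_const 2).aestronglyMeasurable 1
      (by
        filter_upwards [hF01 n, ae_mem_unitSquare] with p hFp hp
        have := hf01 p hp
        rw [Real.norm_eq_abs, abs_of_nonneg (sq_nonneg _)]
        nlinarith [hFp.1, hFp.2, this.1, this.2])
  have hcont := tendsto_integral_Rent_of_tendstoInMeasure (measurable_blockAvg · f) hrm hF01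
    (ae_mem_unitSquare.mono hr) hlogr hlogr' (tendstoInMeasure_of_tendsto_integral_sq hsq hfL2)
  simpa using (tendsto_integral_Rent_blockAvg_sub_integral_Rent hrm hr hlogr hlogr' hrae
    (measurable_blockAvg · f) hF01).add hcont

theorem blockAvg_rate_convergence
    (r : ℝ × ℝ → ℝ) (hrm : Measurable r)
    (hr : ∀ p ∈ Set.Icc (0:ℝ) 1 ×ˢ Set.Icc (0:ℝ) 1, r p ∈ Set.Ioo (0:ℝ) 1)
    (hlogr : Integrable (fun p => Real.log (r p)) sqMeasure)
    (hlogr' : Integrable (fun p => Real.log (1 - r p)) sqMeasure)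
    (f : ℝ × ℝ → ℝ) (hfm : Measurable f)
    (hf01 : ∀ p ∈ Set.Icc (0:ℝ) 1 ×ˢ Set.Icc (0:ℝ) 1, f p ∈ Set.Icc (0:ℝ) 1)
    (hfsym : ∀ x y, f (x, y) = f (y, x))
    (hrae : ∀ᵐ p ∂sqMeasure,
      Filter.Tendsto (fun n => blockAvg n r p) Filter.atTop (nhds (r p)))
    (hfL2 : Filter.Tendsto (fun n => ∫ p, (blockAvg n f p - f p)^2 ∂sqMeasure)
      Filter.atTop (nhds 0)) :
    Filter.Tendsto
      (fun n => ∫ p, Rent (blockAvg n f p) (blockAvg n r p) ∂sqMeasure)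
      Filter.atTop (nhds (∫ p, Rent (f p) (r p) ∂sqMeasure)) :=
  blockAvg_rate_convergence_general r hrm hr hlogr hlogr' f hfm hf01 hrae hfL2
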